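/- For every probability distribution π' on 𝕏, every fixed τ ≥ 1, and every D > 0: lim_{T→∞} | (1/(T−τ)) R^E_{J_τ(X^T_{[π',P]})}(TD) − (1/(T−τ)) R^E_{J_τ(X^T_{[π',P]})}((T−τ)D) | = 0. -/

import Mathlib

open Filter Finset

/-- `μ` is a probability distribution on the finite set `𝕏`. -/
def IsProbDist {𝕏 : Type} [Fintype 𝕏] (μ : 𝕏 → ℝ) : Prop :=
  (∀ x, 0 ≤ μ x) ∧ ∑ x, μ x = 1

/-- `P` is a stochastic (transition probability) matrix on `𝕏`. -/
def IsStochastic {𝕏 : Type} [Fintype 𝕏] (P : 𝕏 → 𝕏 → ℝ) : Prop :=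
  (∀ x y, 0 ≤ P x y) ∧ ∀ x, ∑ y, P x y = 1

/-- `n`-th power of the transition matrix `P`. -/
def matPow {𝕏 : Type} [Fintype 𝕏] [DecidableEq 𝕏] (P : 𝕏 → 𝕏 → ℝ) : ℕ → 𝕏 → 𝕏 → ℝ
  | 0 => fun x y => if x = y then 1 else 0
  | n + 1 => fun x y => ∑ z, matPow P n x z * P z y

/-- Irreducible and aperiodic chain on a finite state space, i.e. primitive transition matrix:
some power of `P` has all entries strictly positive. -/
def IsIrreducibleAperiodic {𝕏 : Type} [Fintype 𝕏] [DecidableEq 𝕏] (P : 𝕏 → 𝕏 → ℝ) : Prop :=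
  ∃ m : ℕ, 0 < m ∧ ∀ x y, 0 < matPow P m x y

/-- `π` is a stationary distribution of `P`. -/
def IsStationaryDist {𝕏 : Type} [Fintype 𝕏] (P : 𝕏 → 𝕏 → ℝ) (π : 𝕏 → ℝ) : Prop :=
  ∀ y, ∑ x, π x * P x y = π y

/-- Law of the first `n` states of the Markov chain with initial distribution `π'`
and transition matrix `P`. -/
def markovLaw {𝕏 : Type} (π' : 𝕏 → ℝ) (P : 𝕏 → 𝕏 → ℝ) : ∀ n : ℕ, (Fin n → 𝕏) → ℝ
  | 0, _ => 1
  | n + 1, x => π' (x 0) * ∏ i : Fin n, P (x i.castSucc) (x i.succ)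

/-- Distribution of `X_{n+1}` when `X_1 ~ μ` (i.e. `μ Pⁿ`). -/
def stepDist {𝕏 : Type} [Fintype 𝕏] [DecidableEq 𝕏] (μ : 𝕏 → ℝ) (P : 𝕏 → 𝕏 → ℝ)
    (n : ℕ) : 𝕏 → ℝ :=
  fun y => ∑ x, μ x * matPow P n x y

/-- Law of `n` i.i.d. blocks, each distributed according to `q`. -/
def iidLaw {S : Type} [Fintype S] (q : S → ℝ) (n : ℕ) (x : Fin n → S) : ℝ := ∏ i, q (x i)

/-- Additive block distortion built from the single-letter distortion `d`. -/
def blockDist {𝕏 𝕐 : Type} (d : 𝕏 → 𝕐 → ℝ) (T : ℕ) (s : Fin T → 𝕏) (t : Fin T → 𝕐) : ℝ :=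
  ∑ j, d (s j) (t j)

/-- Marginal of the distribution `q` on `𝕏^T` on the last `T - τ` coordinates
(the projection `J_τ`). -/
noncomputable def projDist {𝕏 : Type} [Fintype 𝕏] [DecidableEq 𝕏] {T : ℕ}
    (q : (Fin T → 𝕏) → ℝ) (τ : ℕ) : (Fin (T - τ) → 𝕏) → ℝ :=
  fun r => ∑ s : Fin T → 𝕏,
    if (∀ i : Fin (T - τ), s ⟨τ + i.val, by have := i.isLt; omega⟩ = r i) then q s else 0

/-- Maximal value of the single-letter distortion measure. -/
noncomputable def Dmax {𝕏 𝕐 : Type} [Fintype 𝕏] [Fintype 𝕐] (d : 𝕏 → 𝕐 → ℝ) : ℝ :=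
  ⨆ p : 𝕏 × 𝕐, d p.1 p.2

/-- Minimal strictly positive value of the single-letter distortion measure. -/
noncomputable def Dmin {𝕏 𝕐 : Type} [Fintype 𝕏] [Fintype 𝕐] (d : 𝕏 → 𝕐 → ℝ) : ℝ :=
  ⨅ p : {p : 𝕏 × 𝕐 // 0 < d p.1 p.2}, d p.1.1 p.1.2

/-- Operational rate-distortion function under the expected distortion criterion, for the
source whose first `n` letters have law `law n` and with single-letter distortion `ρ`:
the infimum of all rates `R` for which there is a sequence of rate-`R` codes
`⟨eⁿ, fⁿ⟩` (with codebook size `2^⌊nR⌋`) whose expected normalized `n`-letter distortion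
has `limsup` at most `D`. -/
noncomputable def RDE {S T : Type} [Fintype S]
    (law : ∀ n : ℕ, (Fin n → S) → ℝ) (ρ : S → T → ℝ) (D : ℝ) : ℝ :=
  sInf {R : ℝ |
    ∃ enc : ∀ n : ℕ, (Fin n → S) → Fin (2 ^ ⌊(n : ℝ) * R⌋₊),
    ∃ dec : ∀ n : ℕ, Fin (2 ^ ⌊(n : ℝ) * R⌋₊) → (Fin n → T),
      Filter.limsup (fun n : ℕ =>
        ∑ x : Fin n → S, law n x * ((n : ℝ)⁻¹ *
          ∑ i, ρ (x i) (dec n (enc n x) i))) Filter.atTop ≤ D}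

/-- Operational rate-distortion function of the Markov source `X_{[π',P]}`. -/
noncomputable def markovRDE {𝕏 : Type} [Fintype 𝕏]
    (π' : 𝕏 → ℝ) (P : 𝕏 → 𝕏 → ℝ) (d : 𝕏 → 𝕏 → ℝ) (D : ℝ) : ℝ :=
  RDE (markovLaw π' P) d D

/-- Operational rate-distortion function of the block-independent approximation
(BIA) `X^T_{[π',P]}` source. -/
noncomputable def biaRDE {𝕏 : Type} [Fintype 𝕏]
    (π' : 𝕏 → ℝ) (P : 𝕏 → 𝕏 → ℝ) (d : 𝕏 → 𝕏 → ℝ) (T : ℕ) (Δ : ℝ) : ℝ :=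
  RDE (iidLaw (markovLaw π' P T)) (blockDist d T) Δ

/-- Operational rate-distortion function of the vector i.i.d. `J_τ(X^T_{[π',P]})` source. -/
noncomputable def projRDE {𝕏 : Type} [Fintype 𝕏] [DecidableEq 𝕏]
    (π' : 𝕏 → ℝ) (P : 𝕏 → 𝕏 → ℝ) (d : 𝕏 → 𝕏 → ℝ) (T τ : ℕ) (Δ : ℝ) : ℝ :=
  RDE (iidLaw (projDist (markovLaw π' P T) τ)) (blockDist d (T - τ)) Δ

/-- `δ^{(τ)}`: the `l¹` distance between the distribution of `X_{τ+1}` under `X_{[π',P]}`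
and the stationary distribution `π`. -/
def l1dev {𝕏 : Type} [Fintype 𝕏] [DecidableEq 𝕏]
    (π' : 𝕏 → ℝ) (P : 𝕏 → 𝕏 → ℝ) (π : 𝕏 → ℝ) (τ : ℕ) : ℝ :=
  ∑ x, |stepDist π' P τ x - π x|

open Topology

/-! Since `R^E` is nonincreasing in the distortion level, only `R^E((T−τ)D) ≤ R^E(TD) + o(T−τ)`
needs proof. Take a code for blocks of length `m = T − τ` at level `TD`, and append to every
block the positions and true letters of a cyclic window of `τ` coordinates. Averaging over the
`m` windows, one of them carries at least the fraction `τ/m` of the block distortion, so patching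
it brings the distortion down to `(1 − τ/m) T D ≤ (T − τ) D`. The side information costs
`τ (log m + log |𝕏| + O(1)) = o(m)` bits per block. -/

lemma Real.sInf_eq_sInf_inter_Ici {A : Set ℝ} (hA : ∀ R ∈ A, R < 0 → Set.Iic 0 ⊆ A) :
    sInf A = sInf (A ∩ Set.Ici 0) := by
  by_cases hneg : ∃ R ∈ A, R < 0
  · obtain ⟨R, hRA, hR⟩ := hneg
    have hIic := hA R hRA hR
    have hunb : ¬BddBelow A := fun hb => not_bddBelow_Iic (a := (0 : ℝ)) (hb.mono hIic)
    have hleast : IsLeast (A ∩ Set.Ici 0) 0 :=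
      ⟨⟨hIic Set.self_mem_Iic, Set.self_mem_Ici⟩, fun _ hx => hx.2⟩
    rw [Real.sInf_of_not_bddBelow hunb, hleast.csInf_eq]
  · push Not at hneg
    rw [Set.inter_eq_left.mpr fun R hR => Set.mem_Ici.mpr (hneg R hR)]

lemma Filter.limsup_le_mul_of_le_mul {F G : ℕ → ℝ} {B c L : ℝ} (hc : 0 ≤ c)
    (hF0 : ∀ n, 0 ≤ F n) (hFB : ∀ n, F n ≤ B) (hG0 : ∀ n, 0 ≤ G n) (hGF : ∀ n, G n ≤ c * F n)
    (hL : limsup F atTop ≤ L) : limsup G atTop ≤ c * L := by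
  have hFbdd : IsBoundedUnder (· ≤ ·) atTop F := isBoundedUnder_of ⟨B, hFB⟩
  have hmul : limsup (fun n => c * F n) atTop = c * limsup F atTop :=
    ((monotone_mul_left_of_nonneg hc).map_limsup_of_continuousAt F
      (continuous_const_mul c).continuousAt hFbdd (isCoboundedUnder_le_of_le atTop hF0)).symm
  calc limsup G atTop ≤ limsup (fun n => c * F n) atTop :=
        limsup_le_limsup (Eventually.of_forall hGF) (isCoboundedUnder_le_of_le atTop hG0)
          (isBoundedUnder_of ⟨c * B, fun n => mul_le_mul_of_nonneg_left (hFB n) hc⟩)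
    _ = c * limsup F atTop := hmul
    _ ≤ c * L := mul_le_mul_of_nonneg_left hL hc

section RateDistortion

variable {S T : Type} [Fintype S] (law : ∀ n : ℕ, (Fin n → S) → ℝ) (ρ : S → T → ℝ)

noncomputable def avgDistortion (n : ℕ) (φ : (Fin n → S) → Fin n → T) : ℝ :=
  ∑ x : Fin n → S, law n x * ((n : ℝ)⁻¹ * ∑ i, ρ (x i) (φ x i))

def achievableRates (D : ℝ) : Set ℝ :=
  {R | ∃ enc : ∀ n : ℕ, (Fin n → S) → Fin (2 ^ ⌊(n : ℝ) * R⌋₊),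
    ∃ dec : ∀ n : ℕ, Fin (2 ^ ⌊(n : ℝ) * R⌋₊) → (Fin n → T),
      limsup (fun n => avgDistortion law ρ n fun x => dec n (enc n x)) atTop ≤ D}

variable {law ρ}

lemma avgDistortion_nonneg (hlaw : ∀ n x, 0 ≤ law n x) (hρ : ∀ s t, 0 ≤ ρ s t) (n : ℕ)
    (φ : (Fin n → S) → Fin n → T) : 0 ≤ avgDistortion law ρ n φ :=
  sum_nonneg fun x _ => mul_nonneg (hlaw n x) (mul_nonneg (by positivity)
    (sum_nonneg fun i _ => hρ _ _))

lemma avgDistortion_le (hlaw : ∀ n, IsProbDist (law n)) {B : ℝ} (hB : 0 ≤ B)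
    (hρ : ∀ s t, ρ s t ≤ B) (n : ℕ) (φ : (Fin n → S) → Fin n → T) :
    avgDistortion law ρ n φ ≤ B := by
  have hblock : ∀ x : Fin n → S, (n : ℝ)⁻¹ * ∑ i, ρ (x i) (φ x i) ≤ B := by
    intro x
    rcases Nat.eq_zero_or_pos n with rfl | hn
    · simpa using hB
    · rw [inv_mul_le_iff₀ (by positivity)]
      simpa using sum_le_sum fun i (_ : i ∈ univ) => hρ (x i) (φ x i)
  calc avgDistortion law ρ n φ ≤ ∑ x, law n x * B :=
        sum_le_sum fun x _ => mul_le_mul_of_nonneg_left (hblock x) ((hlaw n).1 x)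
    _ = B := by rw [← sum_mul, (hlaw n).2, one_mul]

lemma avgDistortion_le_mul (hlaw : ∀ n x, 0 ≤ law n x) {n : ℕ} {φ ψ : (Fin n → S) → Fin n → T}
    {θ : ℝ} (h : ∀ x i, ρ (x i) (ψ x i) ≤ θ * ρ (x i) (φ x i)) :
    avgDistortion law ρ n ψ ≤ θ * avgDistortion law ρ n φ := by
  rw [avgDistortion, avgDistortion, mul_sum]
  refine sum_le_sum fun x _ => ?_
  calc law n x * ((n : ℝ)⁻¹ * ∑ i, ρ (x i) (ψ x i))
      ≤ law n x * ((n : ℝ)⁻¹ * ∑ i, θ * ρ (x i) (φ x i)) := by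
        gcongr with i
        · exact hlaw n x
        · exact h x i
    _ = θ * (law n x * ((n : ℝ)⁻¹ * ∑ i, ρ (x i) (φ x i))) := by
        rw [← mul_sum]; ring

lemma achievableRates_mono : Monotone (achievableRates law ρ) :=
  fun _ _ hD _ ⟨enc, dec, h⟩ => ⟨enc, dec, h.trans hD⟩

lemma mem_achievableRates_of_nonpos {D R R' : ℝ} (hR : R ≤ 0) (hR' : R' ≤ 0)
    (h : R ∈ achievableRates law ρ D) : R' ∈ achievableRates law ρ D := by
  obtain ⟨enc, dec, hlim⟩ := h
  have hsize : ∀ n : ℕ, 2 ^ ⌊(n : ℝ) * R⌋₊ = 2 ^ ⌊(n : ℝ) * R'⌋₊ := fun n => by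
    rw [Nat.floor_of_nonpos (mul_nonpos_of_nonneg_of_nonpos n.cast_nonneg hR),
      Nat.floor_of_nonpos (mul_nonpos_of_nonneg_of_nonpos n.cast_nonneg hR')]
  exact ⟨fun n x => Fin.cast (hsize n) (enc n x), fun n z => dec n (Fin.cast (hsize n).symm z),
    by simpa using hlim⟩

-- All rates `R ≤ 0` give the one-word codebook, so a negative achievable rate makes the set
-- unbounded below and `sInf` returns its junk value `0`.
lemma RDE_eq_sInf_nonneg (D : ℝ) :
    RDE law ρ D = sInf (achievableRates law ρ D ∩ Set.Ici 0) :=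
  Real.sInf_eq_sInf_inter_Ici fun _ hR hneg _ hR' => mem_achievableRates_of_nonpos hneg.le hR' hR

lemma RDE_le_RDE_add {D D' K : ℝ} (hne : (achievableRates law ρ D).Nonempty) (hK : 0 ≤ K)
    (h : ∀ R ∈ achievableRates law ρ D, 0 ≤ R → R + K ∈ achievableRates law ρ D') :
    RDE law ρ D' ≤ RDE law ρ D + K := by
  obtain ⟨R₀, hR₀⟩ := hne
  have hne' : (achievableRates law ρ D ∩ Set.Ici 0).Nonempty := by
    rcases le_total R₀ 0 with h₀ | h₀
    · exact ⟨0, mem_achievableRates_of_nonpos h₀ le_rfl hR₀, Set.self_mem_Ici⟩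
    · exact ⟨R₀, hR₀, h₀⟩
  rw [RDE_eq_sInf_nonneg, RDE_eq_sInf_nonneg, ← sub_le_iff_le_add]
  refine le_csInf hne' fun R ⟨hR, hR0⟩ => sub_le_iff_le_add.mpr ?_
  exact csInf_le ⟨0, fun _ h => h.2⟩ ⟨h R hR hR0, add_nonneg hR0 hK⟩

lemma RDE_le_RDE_of_le {D D' : ℝ} (hne : (achievableRates law ρ D).Nonempty) (hDD' : D ≤ D') :
    RDE law ρ D' ≤ RDE law ρ D := by
  simpa using RDE_le_RDE_add hne le_rfl fun R hR _ => by simpa using achievableRates_mono hDD' hR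

lemma card_mem_achievableRates [Nonempty S] {ρ : S → S → ℝ} (hρ : ∀ s, ρ s s = 0) {D : ℝ}
    (hD : 0 ≤ D) : (Fintype.card S : ℝ) ∈ achievableRates law ρ D := by
  have hsize : ∀ n : ℕ, Fintype.card (Fin n → S) ≤
      Fintype.card (Fin (2 ^ ⌊(n : ℝ) * Fintype.card S⌋₊)) := fun n => by
    rw [Fintype.card_fun, Fintype.card_fin, Fintype.card_fin, ← Nat.cast_mul, Nat.floor_natCast,
      mul_comm, pow_mul]
    exact Nat.pow_le_pow_left Nat.lt_two_pow_self.le n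
  let E n := Classical.choice (Function.Embedding.nonempty_of_card_le (hsize n))
  refine ⟨fun n x => E n x, fun n z => Function.invFun (E n) z, ?_⟩
  simp [avgDistortion, Function.leftInverse_invFun (E _).injective _, hρ, hD]

lemma add_mem_achievableRates_of_refine [Fintype T] (hlaw : ∀ n, IsProbDist (law n))
    (hρ : ∀ s t, 0 ≤ ρ s t) {Γ : Type} [Fintype Γ] [Nonempty Γ] {c : ℕ}
    (hΓ : Fintype.card Γ ≤ 2 ^ c) (help : S → T → Γ) (refine : T → Γ → T) {θ : ℝ} (hθ : 0 ≤ θ)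
    (hrefine : ∀ s t, ρ s (refine t (help s t)) ≤ θ * ρ s t) {D R : ℝ} (hR : 0 ≤ R)
    (hmem : R ∈ achievableRates law ρ D) : R + c ∈ achievableRates law ρ (θ * D) := by
  obtain ⟨enc, dec, hlim⟩ := hmem
  have hsize : ∀ n : ℕ, Fintype.card (Fin (2 ^ ⌊(n : ℝ) * R⌋₊) × (Fin n → Γ)) ≤
      Fintype.card (Fin (2 ^ ⌊(n : ℝ) * (R + c)⌋₊)) := fun n => by
    have hfloor : ⌊(n : ℝ) * (R + c)⌋₊ = ⌊(n : ℝ) * R⌋₊ + n * c := by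
      rw [mul_add, ← Nat.cast_mul, Nat.floor_add_natCast (by positivity)]
    rw [Fintype.card_prod, Fintype.card_fun, Fintype.card_fin, Fintype.card_fin, Fintype.card_fin,
      hfloor, pow_add, mul_comm n c, pow_mul]
    exact Nat.mul_le_mul_left _ (Nat.pow_le_pow_left hΓ n)
  let E n := Classical.choice (Function.Embedding.nonempty_of_card_le (hsize n))
  let side n (x : Fin n → S) : Fin n → Γ := fun i => help (x i) (dec n (enc n x) i)
  refine ⟨fun n x => E n (enc n x, side n x),
    fun n z => let w := Function.invFun (E n) z; fun i => refine (dec n w.1 i) (w.2 i), ?_⟩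
  simp only [Function.leftInverse_invFun (E _).injective _]
  obtain ⟨B, hB⟩ := (Set.finite_range fun p : S × T => ρ p.1 p.2).bddAbove
  have hρB : ∀ s t, ρ s t ≤ max B 0 := fun s t => (hB ⟨(s, t), rfl⟩).trans (le_max_left _ _)
  have hlaw0 : ∀ n x, 0 ≤ law n x := fun n => (hlaw n).1
  exact limsup_le_mul_of_le_mul hθ (fun n => avgDistortion_nonneg hlaw0 hρ n _)
    (fun n => avgDistortion_le hlaw (le_max_right _ _) hρB n _)
    (fun n => avgDistortion_nonneg hlaw0 hρ n _)
    (fun n => avgDistortion_le_mul hlaw0 fun x i => hrefine _ _) hlim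

end RateDistortion

lemma markovLaw_cons {𝕏 : Type} (μ : 𝕏 → ℝ) (P : 𝕏 → 𝕏 → ℝ) (n : ℕ) (a : 𝕏) (y : Fin n → 𝕏) :
    markovLaw μ P (n + 1) (Fin.cons a y) = μ a * markovLaw (P a) P n y := by
  cases n with
  | zero => simp [markovLaw]
  | succ n => simp [markovLaw, Fin.prod_univ_succ]

section ProbDist

variable {𝕏 : Type} [Fintype 𝕏]

lemma IsProbDist.nonempty {μ : 𝕏 → ℝ} (hμ : IsProbDist μ) : Nonempty 𝕏 :=
  univ_nonempty_iff.mp (nonempty_of_sum_ne_zero (hμ.2.symm ▸ one_ne_zero))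

lemma IsProbDist.iidLaw {q : 𝕏 → ℝ} (hq : IsProbDist q) (n : ℕ) : IsProbDist (iidLaw q n) := by
  refine ⟨fun _ => prod_nonneg fun i _ => hq.1 _, ?_⟩
  change ∑ x : Fin n → 𝕏, ∏ i, q (x i) = 1
  rw [← Fintype.prod_sum fun (_ : Fin n) s => q s]
  simp [hq.2]

lemma IsProbDist.projDist [DecidableEq 𝕏] {T : ℕ} {q : (Fin T → 𝕏) → ℝ} (hq : IsProbDist q)
    (τ : ℕ) : IsProbDist (projDist q τ) := by
  refine ⟨fun r => sum_nonneg fun s _ => by split_ifs; exacts [hq.1 s, le_rfl], ?_⟩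
  unfold _root_.projDist
  rw [sum_comm, ← hq.2]
  refine sum_congr rfl fun s _ => ?_
  simp only [← funext_iff]
  rw [sum_ite_eq]
  simp

lemma IsProbDist.markovLaw {μ : 𝕏 → ℝ} (hμ : IsProbDist μ) {P : 𝕏 → 𝕏 → ℝ}
    (hP : IsStochastic P) (n : ℕ) : IsProbDist (markovLaw μ P n) := by
  refine ⟨fun x => ?_, ?_⟩
  · cases n with
    | zero => exact zero_le_one
    | succ n => exact mul_nonneg (hμ.1 _) (prod_nonneg fun i _ => hP.1 _ _)
  induction n generalizing μ with
  | zero => exact Fintype.sum_unique _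
  | succ n ih =>
    rw [← hμ.2, ← (Fin.consEquiv fun _ => 𝕏).sum_comp, Fintype.sum_prod_type]
    refine sum_congr rfl fun a _ => ?_
    change ∑ y, _root_.markovLaw μ P (n + 1) (Fin.cons a y) = μ a
    simp only [markovLaw_cons, ← mul_sum, ih ⟨hP.1 a, hP.2 a⟩, mul_one]

end ProbDist

lemma Fin.exists_window_sum_ge {m τ : ℕ} [NeZero m] (hτm : τ ≤ m) (f : Fin m → ℝ) :
    ∃ r : Fin m, (τ : ℝ) / m * ∑ j, f j ≤ ∑ i : Fin τ, f (r + Fin.castLE hτm i) := by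
  have hm : (m : ℝ) ≠ 0 := Nat.cast_ne_zero.mpr (NeZero.ne m)
  have hsum : ∑ _r : Fin m, (τ : ℝ) / m * ∑ j, f j =
      ∑ r : Fin m, ∑ i : Fin τ, f (r + Fin.castLE hτm i) := by
    have hshift : ∀ c : Fin m, ∑ r, f (r + c) = ∑ j, f j := fun c =>
      Equiv.sum_comp (Equiv.addRight c) f
    rw [sum_comm, sum_const, sum_congr rfl fun i _ => hshift _, sum_const]
    simp only [nsmul_eq_mul]
    field_simp
  obtain ⟨r, -, hr⟩ := exists_le_of_sum_le univ_nonempty hsum.le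
  exact ⟨r, hr⟩

section Patch

variable {𝕏 : Type} {m τ : ℕ}

noncomputable def patch (y : Fin m → 𝕏) (γ : Fin τ → Fin m × 𝕏) : Fin m → 𝕏 := fun j =>
  if h : ∃ i, (γ i).1 = j then (γ h.choose).2 else y j

lemma patch_apply_of_mem_range {p : Fin τ → Fin m} (s y : Fin m → 𝕏) {j : Fin m}
    (hj : j ∈ Set.range p) : patch y (fun i => (p i, s (p i))) j = s j := by
  dsimp only [patch]
  rw [dif_pos (show ∃ i, p i = j from hj)]
  exact congrArg s hj.choose_spec

lemma patch_apply_of_notMem_range {p : Fin τ → Fin m} (s y : Fin m → 𝕏) {j : Fin m}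
    (hj : j ∉ Set.range p) : patch y (fun i => (p i, s (p i))) j = y j :=
  dif_neg hj

lemma blockDist_patch {d : 𝕏 → 𝕏 → ℝ} (hdiag : ∀ x, d x x = 0)
    {p : Fin τ → Fin m} (hp : Function.Injective p) (s y : Fin m → 𝕏) :
    blockDist d m s (patch y fun i => (p i, s (p i))) =
      blockDist d m s y - ∑ i, d (s (p i)) (y (p i)) := by
  have hterm : ∀ j, d (s j) (patch y (fun i => (p i, s (p i))) j) =
      d (s j) (y j) - if j ∈ univ.image p then d (s j) (y j) else 0 := fun j => by
    by_cases hj : j ∈ Set.range p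
    · rw [patch_apply_of_mem_range s y hj, hdiag, if_pos (by simpa using hj), sub_self]
    · rw [patch_apply_of_notMem_range s y hj, if_neg (by simpa using hj), sub_zero]
  rw [blockDist, blockDist, sum_congr rfl fun j _ => hterm j, sum_sub_distrib, sum_ite_mem,
    univ_inter, sum_image fun a _ b _ h => hp h]

lemma exists_patch_blockDist_le [NeZero m] {d : 𝕏 → 𝕏 → ℝ} (hdiag : ∀ x, d x x = 0)
    (hτm : τ ≤ m) (s y : Fin m → 𝕏) :
    ∃ γ : Fin τ → Fin m × 𝕏, blockDist d m s (patch y γ) ≤ (1 - τ / m) * blockDist d m s y := by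
  obtain ⟨r, hr⟩ := Fin.exists_window_sum_ge hτm fun j => d (s j) (y j)
  let p : Fin τ → Fin m := fun i => r + Fin.castLE hτm i
  have hp : Function.Injective p := (add_right_injective r).comp (Fin.castLE_injective hτm)
  refine ⟨fun i => (p i, s (p i)), ?_⟩
  rw [blockDist_patch hdiag hp, sub_mul, one_mul]
  exact sub_le_sub_left hr _

end Patch

lemma tendsto_natLog_div_atTop (b : ℕ) :
    Tendsto (fun m : ℕ => (Nat.log b m : ℝ) / m) atTop (𝓝 0) := by
  have hlog : Tendsto (fun m : ℕ => Real.log m / m / Real.log b) atTop (𝓝 0) := by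
    simpa using (Real.isLittleO_log_id_atTop.tendsto_div_nhds_zero.comp
      tendsto_natCast_atTop_atTop).div_const (Real.log b)
  refine squeeze_zero (fun m => by positivity) (fun m => ?_) hlog
  rw [div_right_comm, ← Real.logb]
  gcongr
  exact Real.natLog_le_logb m b

def correctionBits (m k τ : ℕ) : ℕ := τ * (Nat.log 2 m + Nat.log 2 k + 2)

lemma mul_pow_le_two_pow_correctionBits (m k τ : ℕ) : (m * k) ^ τ ≤ 2 ^ correctionBits m k τ := by
  rw [correctionBits, pow_mul']
  refine Nat.pow_le_pow_left ?_ τ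
  rw [show Nat.log 2 m + Nat.log 2 k + 2 = (Nat.log 2 m + 1) + (Nat.log 2 k + 1) by ring, pow_add]
  exact Nat.mul_le_mul (Nat.lt_pow_succ_log_self one_lt_two m).le
    (Nat.lt_pow_succ_log_self one_lt_two k).le

lemma tendsto_correctionBits_div_atTop (k τ : ℕ) :
    Tendsto (fun m : ℕ => (correctionBits m k τ : ℝ) / m) atTop (𝓝 0) := by
  have h := ((tendsto_natLog_div_atTop 2).add
    (tendsto_one_div_atTop_nhds_zero_nat.const_mul (Nat.log 2 k + 2 : ℝ))).const_mul (τ : ℝ)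
  simp only [mul_zero, add_zero] at h
  refine h.congr fun m => ?_
  simp only [correctionBits]
  push_cast
  ring

theorem RDE_iidLaw_blockDist_le_of_le {𝕏 : Type} [Fintype 𝕏] {d : 𝕏 → 𝕏 → ℝ}
    (hdiag : ∀ x, d x x = 0) {m : ℕ} {q : (Fin m → 𝕏) → ℝ} (hq : IsProbDist q) {L L' : ℝ}
    (hL' : 0 ≤ L') (h : L' ≤ L) :
    RDE (iidLaw q) (blockDist d m) L ≤ RDE (iidLaw q) (blockDist d m) L' :=
  have : Nonempty (Fin m → 𝕏) := hq.nonempty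
  RDE_le_RDE_of_le ⟨_, card_mem_achievableRates (fun s => by simp [blockDist, hdiag]) hL'⟩ h

theorem RDE_iidLaw_blockDist_le_add {𝕏 : Type} [Fintype 𝕏] {d : 𝕏 → 𝕏 → ℝ}
    (hdnn : ∀ x y, 0 ≤ d x y) (hdiag : ∀ x, d x x = 0) {m τ : ℕ} (hτm : τ < m)
    {q : (Fin m → 𝕏) → ℝ} (hq : IsProbDist q) {L L' : ℝ} (hL : 0 ≤ L)
    (hshift : (1 - τ / m) * L ≤ L') :
    RDE (iidLaw q) (blockDist d m) L' ≤
      RDE (iidLaw q) (blockDist d m) L + correctionBits m (Fintype.card 𝕏) τ := by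
  have : NeZero m := ⟨by omega⟩
  have : Nonempty (Fin m → 𝕏) := hq.nonempty
  have : Nonempty 𝕏 := ⟨Classical.arbitrary (Fin m → 𝕏) 0⟩
  have hΓ : Fintype.card (Fin τ → Fin m × 𝕏) ≤ 2 ^ correctionBits m (Fintype.card 𝕏) τ := by
    simpa using mul_pow_le_two_pow_correctionBits m (Fintype.card 𝕏) τ
  have hθ : 0 ≤ 1 - (τ : ℝ) / m :=
    sub_nonneg.mpr (div_le_one_of_le₀ (by exact_mod_cast hτm.le) (Nat.cast_nonneg m))
  choose help hhelp using exists_patch_blockDist_le (d := d) hdiag hτm.le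
  refine RDE_le_RDE_add ⟨_, card_mem_achievableRates (fun s => by simp [blockDist, hdiag]) hL⟩
    (Nat.cast_nonneg _) fun R hR hR0 => achievableRates_mono hshift ?_
  exact add_mem_achievableRates_of_refine (ρ := blockDist d m) hq.iidLaw
    (fun s t => sum_nonneg fun j _ => hdnn _ _) hΓ help patch hθ hhelp hR0 hR

theorem proj_rd_level_shift_tendsto_zero_general
    {𝕏 : Type} [Fintype 𝕏] [DecidableEq 𝕏]
    (d : 𝕏 → 𝕏 → ℝ) (hdnn : ∀ x y, 0 ≤ d x y)
    (hdiag : ∀ x, d x x = 0)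
    (P : 𝕏 → 𝕏 → ℝ) (hP : IsStochastic P)
    (π' : 𝕏 → ℝ) (hπ' : IsProbDist π')
    (τ : ℕ) (D : ℝ) (hD : 0 < D) :
    Filter.Tendsto (fun T : ℕ =>
        |((T : ℝ) - (τ : ℝ))⁻¹ * projRDE π' P d T τ ((T : ℝ) * D) -
          ((T : ℝ) - (τ : ℝ))⁻¹ * projRDE π' P d T τ (((T : ℝ) - (τ : ℝ)) * D)|)
      Filter.atTop (nhds 0) := by
  refine squeeze_zero' (Eventually.of_forall fun T => abs_nonneg _) ?_
    ((tendsto_correctionBits_div_atTop (Fintype.card 𝕏) τ).comp (tendsto_sub_atTop_nat τ))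
  filter_upwards [eventually_gt_atTop (2 * τ)] with T hT
  have hm : ((T - τ : ℕ) : ℝ) = T - τ := Nat.cast_sub (by omega)
  have hmpos : (0 : ℝ) < T - τ := by rw [← hm]; exact_mod_cast (by omega : 0 < T - τ)
  have hq := (hπ'.markovLaw hP T).projDist τ
  have hlevel : (1 - τ / ((T - τ : ℕ) : ℝ)) * (T * D) ≤ (T - τ) * D := by
    have : (1 - τ / ((T : ℝ) - τ)) * T ≤ T - τ := by
      rw [one_sub_div hmpos.ne', div_mul_eq_mul_div, div_le_iff₀ hmpos]
      nlinarith
    rw [hm, ← mul_assoc]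
    exact mul_le_mul_of_nonneg_right this hD.le
  have hlow : projRDE π' P d T τ (T * D) ≤ projRDE π' P d T τ ((T - τ) * D) :=
    RDE_iidLaw_blockDist_le_of_le hdiag hq (mul_nonneg hmpos.le hD.le) (by nlinarith)
  have hup : projRDE π' P d T τ ((T - τ) * D) ≤
      projRDE π' P d T τ (T * D) + correctionBits (T - τ) (Fintype.card 𝕏) τ :=
    RDE_iidLaw_blockDist_le_add hdnn hdiag (by omega) hq (by positivity) hlevel
  rw [← mul_sub, abs_mul, abs_of_pos (inv_pos.mpr hmpos), abs_of_nonpos (sub_nonpos.mpr hlow),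
    Function.comp_apply, hm, inv_mul_eq_div]
  gcongr
  linarith

/-- **Equation (31).** For every fixed `τ ≥ 1` and `D > 0`,
`lim_{T→∞} | (1/(T−τ)) R^E_{J_τ(X^T_{[π',P]})}(TD) − (1/(T−τ)) R^E_{J_τ(X^T_{[π',P]})}((T−τ)D) | = 0`. -/
theorem proj_rd_level_shift_tendsto_zero
    {𝕏 : Type} [Fintype 𝕏] [DecidableEq 𝕏] (hcard : 2 ≤ Fintype.card 𝕏)
    (d : 𝕏 → 𝕏 → ℝ) (hdnn : ∀ x y, 0 ≤ d x y)
    (hdiag : ∀ x, d x x = 0) (hdpos : ∀ x y, x ≠ y → 0 < d x y)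
    (P : 𝕏 → 𝕏 → ℝ) (hP : IsStochastic P) (hPia : IsIrreducibleAperiodic P)
    (π : 𝕏 → ℝ) (hπ : IsProbDist π) (hπstat : IsStationaryDist P π)
    (π' : 𝕏 → ℝ) (hπ' : IsProbDist π')
    (τ : ℕ) (hτ : 1 ≤ τ) (D : ℝ) (hD : 0 < D) :
    Filter.Tendsto (fun T : ℕ =>
        |((T : ℝ) - (τ : ℝ))⁻¹ * projRDE π' P d T τ ((T : ℝ) * D) -
          ((T : ℝ) - (τ : ℝ))⁻¹ * projRDE π' P d T τ (((T : ℝ) - (τ : ℝ)) * D)|)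
      Filter.atTop (nhds 0) :=
  proj_rd_level_shift_tendsto_zero_general d hdnn hdiag P hP π' hπ' τ D hD
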